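/- Let f : (ZMod 3)^K → ZMod 3 and g : (ZMod 3)^L → ZMod 3 be arbitrary functions, and write F = ω^f and G = ω^g. Then, under the 4NAT test distribution, Pr[4NAT(f(x), g(y), g(z), g(w)) = 1] = 5/9 + (2/3)·Re E[F(x)·conj(G(y))] + (2/3)·Re E[G(y)·conj(G(z))] − (2/3)·Re E[F(x)·G(y)·G(z)] − (2/9)·Re E[G(y)·G(z)·G(w)]. -/

import Mathlib

/-! With `ψ` the standard additive character of `ZMod 3`, so that `ω ^ u.val = ψ u`, the
indicator of 4NAT has the Fourier expansion (a finite check over `(ZMod 3)⁴`)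
`9 · [4NAT(a, b, c, e)] = 5 + Σ_{pairs} 2 Re ψ(difference) - Σ_{triples} 2 Re ψ(sum)`,
with six pair terms and four triple terms. The test distribution is invariant under permuting
`y, z, w` (TwoPair is symmetric in its last three arguments), so in expectation the three
`x`-pair terms coincide, as do the three pair terms among `y, z, w` and the three triple terms
involving `x`. -/

open Finset

def fourNAT (a : Fin 4 → ZMod 3) : Prop := ∃ c : ZMod 3, ∀ i, a i ≠ c

def TwoPair (a : Fin 4 → ZMod 3) : Prop :=
  ∃ b c : ZMod 3, b ≠ c ∧
    (univ.filter fun i => a i = b).card = 2 ∧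
    (univ.filter fun i => a i = c).card = 2

-- Probability of an event `E x y z w` under the 4NAT test distribution with
-- parameters `d`, `K` (coordinates `j ∈ [L]`, `L = dK`, are encoded as pairs
-- `(i, j') ∈ Fin K × Fin d` with block `π(j) = i`): `x` is uniform on
-- `(ZMod 3)^K` and, independently for each coordinate `j`, `(y_j, z_j, w_j)`
-- is uniform on the 6 triples with `TwoPair (x_{π(j)}, y_j, z_j, w_j)`.
open Classical in
noncomputable def natTestPr (d K : ℕ)
    (E : (Fin K → ZMod 3) → ((Fin K × Fin d) → ZMod 3) →
         ((Fin K × Fin d) → ZMod 3) → ((Fin K × Fin d) → ZMod 3) → Prop) : ℝ :=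
  (∑ x : Fin K → ZMod 3, ∑ y : (Fin K × Fin d) → ZMod 3,
    ∑ z : (Fin K × Fin d) → ZMod 3, ∑ w : (Fin K × Fin d) → ZMod 3,
      (if (∀ j : Fin K × Fin d, TwoPair ![x j.1, y j, z j, w j]) ∧ E x y z w
       then 1 else 0))
    / (3 ^ K * 6 ^ (d * K))

noncomputable def ω : ℂ := Complex.exp (2 * (Real.pi : ℂ) * Complex.I / 3)

open Classical in
noncomputable def natTestExpC (d K : ℕ)
    (h : (Fin K → ZMod 3) → ((Fin K × Fin d) → ZMod 3) →
         ((Fin K × Fin d) → ZMod 3) → ((Fin K × Fin d) → ZMod 3) → ℂ) : ℂ :=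
  (∑ x : Fin K → ZMod 3, ∑ y : (Fin K × Fin d) → ZMod 3,
    ∑ z : (Fin K × Fin d) → ZMod 3, ∑ w : (Fin K × Fin d) → ZMod 3,
      (if ∀ j : Fin K × Fin d, TwoPair ![x j.1, y j, z j, w j] then 1 else 0)
        * h x y z w)
    / (3 ^ K * 6 ^ (d * K))

lemma omega_pow_val (a : ZMod 3) : ω ^ a.val = ZMod.stdAddChar a := by
  rw [ZMod.stdAddChar_apply, ZMod.toCircle_apply, ω, ← Complex.exp_nat_mul]
  push_cast
  ring_nf

def twoCos (a : ZMod 3) : ℤ := if a = 0 then 2 else -1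

lemma re_stdAddChar_one : (ZMod.stdAddChar (1 : ZMod 3)).re = -1 / 2 := by
  rw [ZMod.stdAddChar_apply, ZMod.toCircle_apply, ZMod.val_one, Complex.exp_re]
  have h : 2 * Real.pi / 3 = Real.pi - Real.pi / 3 := by ring
  norm_num [h, Real.cos_pi_sub, Real.cos_pi_div_three]

lemma re_stdAddChar (a : ZMod 3) : (ZMod.stdAddChar a).re = twoCos a / 2 := by
  obtain rfl | rfl | rfl : a = 0 ∨ a = 1 ∨ a = -1 := by revert a; decide
  · simp [twoCos]
  · simp [twoCos, re_stdAddChar_one]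
  · simp [twoCos, AddChar.map_neg_eq_conj, re_stdAddChar_one]

lemma re_omega_pow_mul_conj (a b : ZMod 3) :
    (ω ^ a.val * starRingEnd ℂ (ω ^ b.val)).re = twoCos (a - b) / 2 := by
  rw [omega_pow_val, omega_pow_val, ← AddChar.map_neg_eq_conj, ← AddChar.map_add_eq_mul,
    ← sub_eq_add_neg, re_stdAddChar]

lemma re_omega_pow_mul_mul (a b c : ZMod 3) :
    (ω ^ a.val * ω ^ b.val * ω ^ c.val).re = twoCos (a + b + c) / 2 := by
  rw [omega_pow_val, omega_pow_val, omega_pow_val, ← AddChar.map_add_eq_mul,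
    ← AddChar.map_add_eq_mul, re_stdAddChar]

instance : DecidablePred fourNAT := fun _ => by unfold fourNAT; infer_instance

instance : DecidablePred TwoPair := fun _ => by unfold TwoPair; infer_instance

lemma nine_mul_indicator_fourNAT : ∀ a b c e : ZMod 3,
    9 * (if fourNAT ![a, b, c, e] then 1 else 0 : ℤ) =
      5 + (twoCos (a - b) + twoCos (a - c) + twoCos (a - e))
        + (twoCos (b - c) + twoCos (b - e) + twoCos (c - e))
        - (twoCos (a + b + c) + twoCos (a + b + e) + twoCos (a + c + e))
        - twoCos (b + c + e) := by
  unfold twoCos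
  decide

lemma indicator_fourNAT_eq (a b c e : ZMod 3) :
    (if fourNAT ![a, b, c, e] then 1 else 0 : ℝ) =
      (5 + (twoCos (a - b) + twoCos (a - c) + twoCos (a - e) : ℝ)
        + (twoCos (b - c) + twoCos (b - e) + twoCos (c - e) : ℝ)
        - (twoCos (a + b + c) + twoCos (a + b + e) + twoCos (a + c + e) : ℝ)
        - (twoCos (b + c + e) : ℝ)) / 9 := by
  rw [eq_div_iff (by norm_num), mul_comm]
  exact_mod_cast nine_mul_indicator_fourNAT a b c e

lemma twoPair_swap_yz : ∀ a b c e : ZMod 3, TwoPair ![a, c, b, e] ↔ TwoPair ![a, b, c, e] := by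
  decide

lemma twoPair_swap_zw : ∀ a b c e : ZMod 3, TwoPair ![a, b, e, c] ↔ TwoPair ![a, b, c, e] := by
  decide

lemma sum_twoPair_indicator : ∀ a : ZMod 3,
    ∑ b : ZMod 3, ∑ c : ZMod 3, ∑ e : ZMod 3, (if TwoPair ![a, b, c, e] then 1 else 0 : ℕ) = 6 := by
  decide

theorem Fintype.sum_sum_sum_prod {ι α β γ R : Type*} [Fintype ι] [DecidableEq ι] [Fintype α]
    [Fintype β] [Fintype γ] [CommSemiring R] (t : ι → α → β → γ → R) :
    ∑ y : ι → α, ∑ z : ι → β, ∑ w : ι → γ, ∏ i, t i (y i) (z i) (w i) =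
      ∏ i, ∑ a, ∑ b, ∑ c, t i a b c := by
  simp only [Fintype.prod_sum]

section NatTest

variable {d K : ℕ}

def natTestWeight (x : Fin K → ZMod 3) (y z w : Fin K × Fin d → ZMod 3) : ℝ :=
  if ∀ j, TwoPair ![x j.1, y j, z j, w j] then 1 else 0

variable (d K) in
noncomputable def natTestExp
    (F : (Fin K → ZMod 3) → (Fin K × Fin d → ZMod 3) → (Fin K × Fin d → ZMod 3) →
      (Fin K × Fin d → ZMod 3) → ℝ) : ℝ :=
  (∑ x, ∑ y, ∑ z, ∑ w, natTestWeight x y z w * F x y z w) / (3 ^ K * 6 ^ (d * K))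

lemma natTestPr_eq_natTestExp
    (E : (Fin K → ZMod 3) → (Fin K × Fin d → ZMod 3) → (Fin K × Fin d → ZMod 3) →
      (Fin K × Fin d → ZMod 3) → Prop) [∀ x y z w, Decidable (E x y z w)] :
    natTestPr d K E = natTestExp d K (fun x y z w => if E x y z w then 1 else 0) := by
  unfold natTestPr natTestExp natTestWeight
  simp only [ite_zero_mul_ite_zero, mul_one]
  congr!

lemma re_natTestExpC
    (h : (Fin K → ZMod 3) → (Fin K × Fin d → ZMod 3) → (Fin K × Fin d → ZMod 3) →
      (Fin K × Fin d → ZMod 3) → ℂ) :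
    (natTestExpC d K h).re = natTestExp d K (fun x y z w => (h x y z w).re) := by
  unfold natTestExpC natTestExp natTestWeight
  rw [show (3 : ℂ) ^ K * 6 ^ (d * K) = ((3 ^ K * 6 ^ (d * K) : ℝ) : ℂ) by push_cast; rfl,
    Complex.div_ofReal_re]
  simp only [Complex.re_sum, ite_mul, one_mul, zero_mul, apply_ite Complex.re, Complex.zero_re]

section

variable
  (F G : (Fin K → ZMod 3) → (Fin K × Fin d → ZMod 3) → (Fin K × Fin d → ZMod 3) →
    (Fin K × Fin d → ZMod 3) → ℝ)

lemma natTestExp_add :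
    natTestExp d K (fun x y z w => F x y z w + G x y z w) =
      natTestExp d K F + natTestExp d K G := by
  simp only [natTestExp, mul_add, sum_add_distrib, add_div]

lemma natTestExp_sub :
    natTestExp d K (fun x y z w => F x y z w - G x y z w) =
      natTestExp d K F - natTestExp d K G := by
  simp only [natTestExp, mul_sub, sum_sub_distrib, sub_div]

lemma natTestExp_div_const (c : ℝ) :
    natTestExp d K (fun x y z w => F x y z w / c) = natTestExp d K F / c := by
  simp only [natTestExp, mul_div_assoc', sum_div, div_right_comm _ c]

lemma natTestWeight_swap_yz (x : Fin K → ZMod 3) (y z w : Fin K × Fin d → ZMod 3) :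
    natTestWeight x z y w = natTestWeight x y z w := by
  simp only [natTestWeight, twoPair_swap_yz]

lemma natTestWeight_swap_zw (x : Fin K → ZMod 3) (y z w : Fin K × Fin d → ZMod 3) :
    natTestWeight x y w z = natTestWeight x y z w := by
  simp only [natTestWeight, twoPair_swap_zw]

lemma natTestExp_swap_yz :
    natTestExp d K (fun x y z w => F x z y w) = natTestExp d K F := by
  unfold natTestExp
  refine congrArg (· / _) (sum_congr rfl fun x _ => ?_)
  rw [sum_comm]
  simp only [natTestWeight_swap_yz]

lemma natTestExp_swap_zw :
    natTestExp d K (fun x y z w => F x y w z) = natTestExp d K F := by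
  unfold natTestExp
  refine congrArg (· / _) (sum_congr rfl fun x _ => sum_congr rfl fun y _ => ?_)
  rw [sum_comm]
  simp only [natTestWeight_swap_zw]

end

lemma sum_natTestWeight (x : Fin K → ZMod 3) :
    ∑ y, ∑ z, ∑ w, natTestWeight (d := d) x y z w = 6 ^ (d * K) := by
  have hcount (a : ZMod 3) :
      ∑ b : ZMod 3, ∑ c : ZMod 3, ∑ e : ZMod 3, (if TwoPair ![a, b, c, e] then 1 else 0 : ℝ) = 6 := by
    exact_mod_cast sum_twoPair_indicator a
  simp only [natTestWeight, ← Fintype.prod_boole]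
  rw [Fintype.sum_sum_sum_prod
    (fun (j : Fin K × Fin d) b c e => if TwoPair ![x j.1, b, c, e] then (1 : ℝ) else 0)]
  simp only [hcount, prod_const, card_univ, Fintype.card_prod, Fintype.card_fin, mul_comm]

lemma natTestExp_const (c : ℝ) : natTestExp d K (fun _ _ _ _ => c) = c := by
  simp only [natTestExp, ← sum_mul, sum_natTestWeight, sum_const, card_univ, Fintype.card_fun,
    ZMod.card, Fintype.card_fin, nsmul_eq_mul]
  push_cast
  field_simp

lemma natTestExp_add_add_of_one (F : (Fin K → ZMod 3) → (Fin K × Fin d → ZMod 3) → ℝ) :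
    natTestExp d K (fun x y z w => F x y + F x z + F x w) =
      3 * natTestExp d K (fun x y _ _ => F x y) := by
  rw [natTestExp_add, natTestExp_add, natTestExp_swap_zw (fun x _ z _ => F x z),
    natTestExp_swap_yz (fun x y _ _ => F x y)]
  ring

lemma natTestExp_add_add_of_two
    (F : (Fin K → ZMod 3) → (Fin K × Fin d → ZMod 3) → (Fin K × Fin d → ZMod 3) → ℝ) :
    natTestExp d K (fun x y z w => F x y z + F x y w + F x z w) =
      3 * natTestExp d K (fun x y z _ => F x y z) := by
  rw [natTestExp_add, natTestExp_add, natTestExp_swap_yz (fun x y _ w => F x y w),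
    natTestExp_swap_zw (fun x y z _ => F x y z)]
  ring

end NatTest

theorem natTest_expansion_general (d K : ℕ)
    (f : (Fin K → ZMod 3) → ZMod 3) (g : ((Fin K × Fin d) → ZMod 3) → ZMod 3) :
    natTestPr d K (fun x y z w => fourNAT ![f x, g y, g z, g w])
      = 5 / 9
        + (2 / 3) * (natTestExpC d K (fun x y _z _w =>
            ω ^ (f x).val * (starRingEnd ℂ) (ω ^ (g y).val))).re
        + (2 / 3) * (natTestExpC d K (fun _x y z _w =>
            ω ^ (g y).val * (starRingEnd ℂ) (ω ^ (g z).val))).re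
        - (2 / 3) * (natTestExpC d K (fun x y z _w =>
            ω ^ (f x).val * ω ^ (g y).val * ω ^ (g z).val)).re
        - (2 / 9) * (natTestExpC d K (fun _x y z w =>
            ω ^ (g y).val * ω ^ (g z).val * ω ^ (g w).val)).re := by
  simp only [natTestPr_eq_natTestExp, indicator_fourNAT_eq, re_natTestExpC,
    re_omega_pow_mul_conj, re_omega_pow_mul_mul, natTestExp_div_const]
  rw [natTestExp_sub, natTestExp_sub, natTestExp_add, natTestExp_add, natTestExp_const,
    natTestExp_add_add_of_one, natTestExp_add_add_of_two, natTestExp_add_add_of_two]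
  ring

theorem natTest_expansion (d K : ℕ) (hd : 0 < d) (hK : 0 < K)
    (f : (Fin K → ZMod 3) → ZMod 3) (g : ((Fin K × Fin d) → ZMod 3) → ZMod 3) :
    natTestPr d K (fun x y z w => fourNAT ![f x, g y, g z, g w])
      = 5 / 9
        + (2 / 3) * (natTestExpC d K (fun x y _z _w =>
            ω ^ (f x).val * (starRingEnd ℂ) (ω ^ (g y).val))).re
        + (2 / 3) * (natTestExpC d K (fun _x y z _w =>
            ω ^ (g y).val * (starRingEnd ℂ) (ω ^ (g z).val))).re
        - (2 / 3) * (natTestExpC d K (fun x y z _w =>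
            ω ^ (f x).val * ω ^ (g y).val * ω ^ (g z).val)).re
        - (2 / 9) * (natTestExpC d K (fun _x y z w =>
            ω ^ (g y).val * ω ^ (g z).val * ω ^ (g w).val)).re :=
  natTest_expansion_general d K f g
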